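/- arXiv:0704.0872 — 9 statements merged into one kernel-verified Lean document; each statement's English description precedes it below -/
import Mathlib

section
/- Let T and T₁ be closed, densely defined operators on a Hilbert space H, and let τ be a sesquilinear form on a dense domain D such that both T and T₁ are represented by τ (i.e., D(T), D(T*), D(T₁), D(T₁*) ⊆ D, (Tψ,φ) = τ(ψ,φ) for ψ ∈ D(T), φ ∈ D, (ψ,T*φ) = τ(ψ,φ) for ψ ∈ D, φ ∈ D(T*), and similarly for T₁). Then T = T₁. -/
/-!
Both `⟪T ψ, φ⟫` and `⟪ψ, T₁* φ⟫` equal `τ ψ φ` for `ψ ∈ D(T)`, `φ ∈ D(T₁*)`, so `T` is a formal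
adjoint of `T₁*` and hence `T ⊆ T₁** = T₁`, `T₁` being closed. The inclusion `T ⊆ T₁**` is
checked on graphs: the orthogonal complement of the closed graph of `T₁` in `H ⊕₂ H` consists of
the pairs `(-T₁* y, y)`, and a pair orthogonal to all of these lies in the graph of `T₁`.
By symmetry also `T₁ ⊆ T`.
-/

open scoped InnerProductSpace

namespace LinearPMap

open WithLp

variable {𝕜 E F : Type*} [RCLike 𝕜]
  [NormedAddCommGroup E] [InnerProductSpace 𝕜 E] [CompleteSpace E]
  [NormedAddCommGroup F] [InnerProductSpace 𝕜 F]
  {S T : E →ₗ.[𝕜] F}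

theorem mem_graph_adjoint_of_mem_orthogonal (hS : Dense (S.domain : Set E))
    {u : WithLp 2 (E × F)}
    (hu : u ∈ (S.graph.comap (prodContinuousLinearEquiv 2 𝕜 E F).toLinearMap)ᗮ) :
    ((ofLp u).snd, -(ofLp u).fst) ∈ S†.graph := by
  rw [adjoint_graph_eq_graph_adjoint hS, Submodule.mem_adjoint_iff]
  intro a b hab
  have horth := Submodule.inner_right_of_mem_orthogonal (u := toLp 2 (a, b)) hab hu
  rw [prod_inner_apply] at horth
  rwa [inner_neg_right, sub_neg_eq_add, add_comm]

variable [CompleteSpace F]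

theorem mem_graph_of_forall_mem_graph_adjoint (hS : S.IsClosed) (hSd : Dense (S.domain : Set E))
    {x : E} {z : F} (h : ∀ y w, (y, w) ∈ S†.graph → ⟪z, y⟫_𝕜 = ⟪x, w⟫_𝕜) :
    (x, z) ∈ S.graph := by
  set e := prodContinuousLinearEquiv 2 𝕜 E F
  set K := S.graph.comap e.toLinearMap
  have hK : _root_.IsClosed (K : Set (WithLp 2 (E × F))) := hS.preimage e.continuous
  suffices toLp 2 (x, z) ∈ Kᗮᗮ by
    rwa [Submodule.orthogonal_orthogonal_eq_closure, hK.submodule_topologicalClosure_eq] at this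
  rw [Submodule.mem_orthogonal']
  intro u hu
  have hzu := h _ _ (mem_graph_adjoint_of_mem_orthogonal hSd hu)
  simp only [prod_inner_apply]
  rw [hzu, inner_neg_right, add_neg_cancel]

theorem IsFormalAdjoint.le_of_isClosed (hS : S.IsClosed) (hSd : Dense (S.domain : Set E))
    (h : T.IsFormalAdjoint S†) : T ≤ S := by
  refine le_of_le_graph fun p hp => ?_
  obtain ⟨x, rfl⟩ := (mem_graph_iff' T).mp hp
  refine mem_graph_of_forall_mem_graph_adjoint hS hSd fun y w hyw => ?_
  obtain ⟨y, hy⟩ := (mem_graph_iff' _).mp hyw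
  obtain ⟨rfl, rfl⟩ := Prod.mk.inj hy
  exact h x y

end LinearPMap

theorem stmt_0_general {H : Type*} [NormedAddCommGroup H] [InnerProductSpace ℂ H] [CompleteSpace H]
    (D : Submodule ℂ H) (τ : D → D → ℂ)
    (T T₁ : H →ₗ.[ℂ] H)
    (hTclosed : T.IsClosed) (hT₁closed : T₁.IsClosed)
    (hTdense : Dense (T.domain : Set H)) (hT₁dense : Dense (T₁.domain : Set H))
    (hTD : T.domain ≤ D) (hTsD : T.adjoint.domain ≤ D)
    (hT₁D : T₁.domain ≤ D) (hT₁sD : T₁.adjoint.domain ≤ D)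
    (hT : ∀ (ψ : T.domain) (φ : D),
      ⟪T ψ, (φ : H)⟫_ℂ = τ (Submodule.inclusion hTD ψ) φ)
    (hTs : ∀ (ψ : D) (φ : T.adjoint.domain),
      ⟪(ψ : H), T.adjoint φ⟫_ℂ = τ ψ (Submodule.inclusion hTsD φ))
    (hT₁ : ∀ (ψ : T₁.domain) (φ : D),
      ⟪T₁ ψ, (φ : H)⟫_ℂ = τ (Submodule.inclusion hT₁D ψ) φ)
    (hT₁s : ∀ (ψ : D) (φ : T₁.adjoint.domain),
      ⟪(ψ : H), T₁.adjoint φ⟫_ℂ = τ ψ (Submodule.inclusion hT₁sD φ)) :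
    T = T₁ := by
  have hTT₁ : T.IsFormalAdjoint T₁.adjoint := fun ψ φ => (hT ψ _).trans (hT₁s _ φ).symm
  have hT₁T : T₁.IsFormalAdjoint T.adjoint := fun ψ φ => (hT₁ ψ _).trans (hTs _ φ).symm
  exact le_antisymm (hTT₁.le_of_isClosed hT₁closed hT₁dense)
    (hT₁T.le_of_isClosed hTclosed hTdense)

/-- Uniqueness of the closed densely defined operator represented by a
sesquilinear form `τ` on a dense domain `D` (Proposition 2.3). -/
theorem stmt_0 {H : Type*} [NormedAddCommGroup H] [InnerProductSpace ℂ H] [CompleteSpace H]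
    (D : Submodule ℂ H) (hD : Dense (D : Set H)) (τ : D → D → ℂ)
    (T T₁ : H →ₗ.[ℂ] H)
    (hTclosed : T.IsClosed) (hT₁closed : T₁.IsClosed)
    (hTdense : Dense (T.domain : Set H)) (hT₁dense : Dense (T₁.domain : Set H))
    (hTD : T.domain ≤ D) (hTsD : T.adjoint.domain ≤ D)
    (hT₁D : T₁.domain ≤ D) (hT₁sD : T₁.adjoint.domain ≤ D)
    (hT : ∀ (ψ : T.domain) (φ : D),
      ⟪T ψ, (φ : H)⟫_ℂ = τ (Submodule.inclusion hTD ψ) φ)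
    (hTs : ∀ (ψ : D) (φ : T.adjoint.domain),
      ⟪(ψ : H), T.adjoint φ⟫_ℂ = τ ψ (Submodule.inclusion hTsD φ))
    (hT₁ : ∀ (ψ : T₁.domain) (φ : D),
      ⟪T₁ ψ, (φ : H)⟫_ℂ = τ (Submodule.inclusion hT₁D ψ) φ)
    (hT₁s : ∀ (ψ : D) (φ : T₁.adjoint.domain),
      ⟪(ψ : H), T₁.adjoint φ⟫_ℂ = τ ψ (Submodule.inclusion hT₁sD φ)) :
    T = T₁ :=
  stmt_0_general D τ T T₁ hTclosed hT₁closed hTdense hT₁dense hTD hTsD hT₁D hT₁sD hT hTs hT₁ hT₁s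
end

section
/- For real numbers a ≥ 0, b ≥ 0, λ, and η ≠ 0, the supremum over ξ ∈ ℝ of ψ(ξ) = (b|ξ| + a)/√((ξ − λ)² + η²) equals (1/|η|)·√((a + |λ|b)² + b²η²). -/
/-!
Put `c = a + |λ|b` and `t = |ξ - λ|`. Since `|ξ| ≤ |λ| + t`, with equality when `ξ` lies on the
far side of `λ` from `0`, the supremum of `ψ` equals that of `g(t) = (c + bt)/√(t² + η²)` over
`t ≥ 0`. By Cauchy–Schwarz for `(c, b|η|)` and `(|η|, t)`, `g ≤ √(c² + b²η²)/|η|`, with equality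
at `t = bη²/c` when `c > 0`; when `c = 0` the bound is `b`, the limit of `g` at infinity.
-/

open Filter Topology Set

theorem mul_add_mul_le_sqrt_mul_sqrt (x₁ x₂ y₁ y₂ : ℝ) :
    x₁ * y₁ + x₂ * y₂ ≤ √(x₁ ^ 2 + x₂ ^ 2) * √(y₁ ^ 2 + y₂ ^ 2) := by
  rw [← Real.sqrt_mul (by positivity)]
  exact Real.le_sqrt_of_sq_le (by nlinarith [sq_nonneg (x₁ * y₂ - x₂ * y₁)])

theorem add_mul_div_sqrt_le (b c : ℝ) {η : ℝ} (hη : η ≠ 0) (t : ℝ) :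
    (c + b * t) / √(t ^ 2 + η ^ 2) ≤ 1 / |η| * √(c ^ 2 + b ^ 2 * η ^ 2) := by
  have key := mul_add_mul_le_sqrt_mul_sqrt c (b * |η|) |η| t
  rw [mul_pow, sq_abs, add_comm (η ^ 2)] at key
  rw [div_le_iff₀ (by positivity), one_div_mul_eq_div, div_mul_eq_mul_div,
    le_div_iff₀ (abs_pos.mpr hη)]
  linarith

theorem add_mul_div_sqrt_eq_of_pos (b η : ℝ) {c : ℝ} (hc : 0 < c) :
    (c + b * (b * η ^ 2 / c)) / √((b * η ^ 2 / c) ^ 2 + η ^ 2)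
      = 1 / |η| * √(c ^ 2 + b ^ 2 * η ^ 2) := by
  have hden : √((b * η ^ 2 / c) ^ 2 + η ^ 2) = |η| * √(c ^ 2 + b ^ 2 * η ^ 2) / c := by
    rw [show (b * η ^ 2 / c) ^ 2 + η ^ 2 = (|η| / c) ^ 2 * (c ^ 2 + b ^ 2 * η ^ 2) by
      rw [div_pow |η|, sq_abs]; field_simp; ring,
      Real.sqrt_mul (sq_nonneg _), Real.sqrt_sq (by positivity)]
    ring
  rw [hden]
  field_simp
  rw [Real.sq_sqrt (by positivity)]

theorem tendsto_add_mul_div_sqrt_atTop (b c η : ℝ) :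
    Tendsto (fun t => (c + b * t) / √(t ^ 2 + η ^ 2)) atTop (𝓝 b) := by
  have hF : Continuous fun s : ℝ => (c * s + b) / √(1 + η ^ 2 * s ^ 2) := by
    fun_prop (disch := intro x; positivity)
  have hlim : Tendsto ((fun s : ℝ => (c * s + b) / √(1 + η ^ 2 * s ^ 2)) ∘ (·⁻¹)) atTop (𝓝 b) := by
    simpa using (hF.tendsto 0).comp tendsto_inv_atTop_zero
  refine hlim.congr' ?_
  filter_upwards [eventually_gt_atTop 0] with t ht
  have hden : √(t ^ 2 + η ^ 2) = t * √(1 + η ^ 2 * t⁻¹ ^ 2) := by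
    rw [show t ^ 2 + η ^ 2 = t ^ 2 * (1 + η ^ 2 * t⁻¹ ^ 2) by field_simp,
      Real.sqrt_mul (sq_nonneg t), Real.sqrt_sq ht.le]
  rw [Function.comp_apply, hden, ← div_div]
  congr 1
  field_simp

theorem isLUB_add_mul_div_sqrt {b c η : ℝ} (hb : 0 ≤ b) (hc : 0 ≤ c) (hη : η ≠ 0) :
    IsLUB ((fun t => (c + b * t) / √(t ^ 2 + η ^ 2)) '' Ici 0)
      (1 / |η| * √(c ^ 2 + b ^ 2 * η ^ 2)) := by
  refine ⟨forall_mem_image.2 fun t _ => add_mul_div_sqrt_le b c hη t, fun u hu => ?_⟩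
  rcases hc.eq_or_lt with rfl | hc
  · have hsup : 1 / |η| * √(0 ^ 2 + b ^ 2 * η ^ 2) = b := by
      rw [← sq_abs η, ← mul_pow, zero_pow two_ne_zero, zero_add, Real.sqrt_sq (by positivity)]
      field_simp [abs_pos.mpr hη]
    rw [hsup]
    exact le_of_tendsto (tendsto_add_mul_div_sqrt_atTop b 0 η)
      ((eventually_ge_atTop 0).mono fun t ht => hu (mem_image_of_mem _ ht))
  · rw [← add_mul_div_sqrt_eq_of_pos b η hc]
    exact hu (mem_image_of_mem _ (mem_Ici.2 (by positivity)))

theorem exists_abs_eq_abs_add_and_abs_sub_eq (l : ℝ) {t : ℝ} (ht : 0 ≤ t) :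
    ∃ ξ, |ξ| = |l| + t ∧ |ξ - l| = t := by
  rcases le_total 0 l with hl | hl
  · exact ⟨l + t, by rw [abs_of_nonneg (by linarith), abs_of_nonneg hl],
      by simp [abs_of_nonneg ht]⟩
  · exact ⟨l - t, by rw [abs_of_nonpos (by linarith), abs_of_nonpos hl]; ring,
      by simp [abs_of_nonneg ht]⟩

/-- The supremum of `ψ(ξ) = (b|ξ| + a)/√((ξ − λ)² + η²)` over `ξ ∈ ℝ` equals
`(1/|η|)·√((a + |λ|b)² + b²η²)` (formula (2.23) and its proof in the Appendix). -/
theorem stmt_1 (a b lam eta : ℝ) (ha : 0 ≤ a) (hb : 0 ≤ b) (heta : eta ≠ 0) :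
    IsLUB (Set.range fun ξ : ℝ => (b * |ξ| + a) / Real.sqrt ((ξ - lam) ^ 2 + eta ^ 2))
      ((1 / |eta|) * Real.sqrt ((a + |lam| * b) ^ 2 + b ^ 2 * eta ^ 2)) := by
  refine (isLUB_add_mul_div_sqrt hb (by positivity) heta).of_subset_of_superset isLUB_Iic ?_ ?_
  · rintro _ ⟨t, ht, rfl⟩
    obtain ⟨ξ, hξ, hξl⟩ := exists_abs_eq_abs_add_and_abs_sub_eq lam ht
    refine ⟨ξ, ?_⟩
    simp only [← sq_abs (ξ - lam), hξ, hξl]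
    ring_nf
  · rintro _ ⟨ξ, rfl⟩
    calc _ ≤ (a + |lam| * b + b * |ξ - lam|) / √(|ξ - lam| ^ 2 + eta ^ 2) := by
          dsimp only
          rw [sq_abs]
          gcongr ?_ / _
          nlinarith [abs_sub_abs_le_abs_sub ξ lam]
      _ ≤ _ := add_mul_div_sqrt_le _ _ heta _
end

section
/- Let H be a selfadjoint operator on a Hilbert space with a + b|H| positive definite (a, b real, b ≥ 0), and suppose εb < 1 for some ε ∈ [0,1]. Then, via the functional calculus, a + b|H| ≤ a/(1 − εb) + (b/(1 − εb))·|H + ε(a + b|H|)| as an inequality of selfadjoint operators (in the sense of quadratic forms on the form domain). -/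
/-! Pointwise on the spectrum, with `t = a + b|x| ≥ 0` the reverse triangle inequality gives
`|x + εt| ≥ |x| - εt`, hence `a + b|x + εt| ≥ t - εbt = (1 - εb) t`; the operator inequality then
follows from monotonicity of the continuous functional calculus. -/

lemma add_mul_abs_le_div_one_sub_mul {a b eps x : ℝ} (hb : 0 ≤ b) (ht : 0 ≤ a + b * |x|)
    (heps : 0 ≤ eps) (hebb : eps * b < 1) :
    a + b * |x| ≤ a / (1 - eps * b) + b * |x + eps * (a + b * |x|)| / (1 - eps * b) := by
  set t := a + b * |x|
  have hshift : |x| - eps * t ≤ |x + eps * t| := by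
    simpa [abs_of_nonneg (mul_nonneg heps ht)] using abs_sub_abs_le_abs_add x (eps * t)
  rw [← add_div, le_div_iff₀ (by linarith)]
  nlinarith [mul_le_mul_of_nonneg_left hshift hb]

theorem stmt_3_general {A : Type*} [CStarAlgebra A] [PartialOrder A] [StarOrderedRing A]
    (H : A) (a b eps : ℝ) (hb : 0 ≤ b)
    (hpos : ∀ x ∈ spectrum ℝ H, 0 < a + b * |x|)
    (heps0 : 0 ≤ eps) (hebb : eps * b < 1) :
    cfc (fun x : ℝ => a + b * |x|) H ≤
      cfc (fun x : ℝ => a / (1 - eps * b) +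
        b * |x + eps * (a + b * |x|)| / (1 - eps * b)) H :=
  cfc_mono fun x hx => add_mul_abs_le_div_one_sub_mul hb (hpos x hx).le heps0 hebb

/-- The operator inequality (4.24): via the functional calculus,
`a + b|H| ≤ a/(1 − εb) + (b/(1 − εb))·|H + ε(a + b|H|)|` for a selfadjoint `H`
with `a + b|H|` positive definite, `b ≥ 0`, `ε ∈ [0,1]`, `εb < 1`. -/
theorem stmt_3 {A : Type*} [CStarAlgebra A] [PartialOrder A] [StarOrderedRing A]
    (H : A) (hH : IsSelfAdjoint H) (a b eps : ℝ) (hb : 0 ≤ b)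
    (hpos : ∀ x ∈ spectrum ℝ H, 0 < a + b * |x|)
    (heps0 : 0 ≤ eps) (heps1 : eps ≤ 1) (hebb : eps * b < 1) :
    cfc (fun x : ℝ => a + b * |x|) H ≤
      cfc (fun x : ℝ => a / (1 - eps * b) +
        b * |x + eps * (a + b * |x|)| / (1 - eps * b)) H :=
  stmt_3_general H a b eps hb hpos heps0 hebb
end

section
/- Let 𝒜 be a unital C*-algebra, a = a* ∈ 𝒜 invertible, and p, q the spectral projections of a belonging to the positive and negative parts of σ(a) respectively, with p, q ≠ 0 and p + q = e. Let b = b* ∈ 𝒜 satisfy pbp = 0 and qbq = 0. Then a + b is invertible in 𝒜. -/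
/-!
Let `s = p - q = 2p - 1`, the sign of `a` by functional calculus. Since `p + q = 1`,
`s b + b s = 2 (pbp - qbq) = 0`, so `s (a + b) = |a| + s b` with `|a| = s a` strictly
positive and `s b` skew-adjoint. Conjugating by `|a| ^ (-1/2)` turns this into `1 + m` with `m`
skew-adjoint, and `(1 - m)(1 + m) = 1 + m⋆m ≥ 1` is invertible.
-/

lemma sub_mul_eq_neg_mul_sub_of_corners_eq_zero {R : Type*} [Ring R] {p q b : R}
    (hpq : p + q = 1) (hpbp : p * b * p = 0) (hqbq : q * b * q = 0) :
    (p - q) * b = -(b * (p - q)) := by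
  rw [eq_neg_iff_add_eq_zero]
  calc (p - q) * b + b * (p - q) = (p - q) * b * (p + q) + (p + q) * b * (p - q) := by
        rw [hpq, mul_one, one_mul]
    _ = 2 • (p * b * p - q * b * q) := by noncomm_ring
    _ = 0 := by rw [hpbp, hqbq, sub_zero, smul_zero]

lemma continuousOn_spectrum_ite_pos {A : Type*} [Ring A] [Algebra ℝ A] {a : A} (hau : IsUnit a)
    (c d : ℝ) : ContinuousOn (fun x : ℝ => if 0 < x then c else d) (spectrum ℝ a) := by
  intro x hx
  refine ContinuousAt.continuousWithinAt ?_
  rcases (ne_of_mem_of_not_mem hx ((spectrum.zero_notMem_iff ℝ).mpr hau)).lt_or_gt with h | h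
  · exact continuousAt_const.congr <|
      (eventually_lt_nhds h).mono fun y hy => (if_neg hy.not_gt).symm
  · exact continuousAt_const.congr <|
      (eventually_gt_nhds h).mono fun y hy => (if_pos hy).symm

section CStarAlgebra

variable {A : Type*} [CStarAlgebra A]

lemma isUnit_one_add_of_star_eq_neg [PartialOrder A] [StarOrderedRing A] {m : A}
    (hm : star m = -m) : IsUnit (1 + m) := by
  have hcomm : Commute (1 - m) (1 + m) := by
    show (1 - m) * (1 + m) = (1 + m) * (1 - m)
    noncomm_ring
  have hprod : (1 - m) * (1 + m) = 1 + star m * m := by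
    rw [hm]
    noncomm_ring
  refine (hcomm.isUnit_mul_iff.mp ?_).2
  rw [hprod]
  exact (isStrictlyPositive_one.add_nonneg (star_mul_self_nonneg m)).isUnit

lemma IsStrictlyPositive.isUnit_add_of_star_eq_neg [PartialOrder A] [StarOrderedRing A]
    {h k : A} (hh : IsStrictlyPositive h) (hk : star k = -k) : IsUnit (h + k) := by
  set c := h ^ (-(1 / 2) : ℝ)
  have hc : IsStrictlyPositive c := hh.rpow h _
  have hconj : c * (h + k) * c = 1 + c * k * c := by
    rw [mul_add, add_mul, CFC.conjugate_rpow_neg_one_half h]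
  have hskew : star (c * k * c) = -(c * k * c) := by
    rw [star_mul, star_mul, hk, (IsSelfAdjoint.of_nonneg hc.nonneg).star_eq]
    noncomm_ring
  have hunit := isUnit_one_add_of_star_eq_neg hskew
  rwa [← hconj, hc.isUnit.mul_right_iff, hc.isUnit.mul_left_iff] at hunit

noncomputable def spectralSign (a : A) : A := cfc (fun x : ℝ => if 0 < x then 1 else -1) a

lemma isSelfAdjoint_spectralSign (a : A) : IsSelfAdjoint (spectralSign a) :=
  cfc_predicate _ a

lemma spectralSign_eq_sub {a : A} (ha : IsSelfAdjoint a) (hau : IsUnit a) :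
    spectralSign a = cfc (fun x : ℝ => if 0 < x then 1 else 0) a -
      (1 - cfc (fun x : ℝ => if 0 < x then 1 else 0) a) := by
  have hχ := continuousOn_spectrum_ite_pos hau 1 0
  rw [← cfc_const_one ℝ a, ← cfc_sub _ _ a continuousOn_const hχ,
    ← cfc_sub _ (fun x : ℝ => 1 - if 0 < x then (1 : ℝ) else 0) a hχ
      (continuousOn_const.sub hχ)]
  exact cfc_congr fun x _ => by split_ifs <;> norm_num

lemma spectralSign_mul_self {a : A} (ha : IsSelfAdjoint a) (hau : IsUnit a) :
    spectralSign a * spectralSign a = 1 := by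
  have hs := continuousOn_spectrum_ite_pos hau 1 (-1)
  rw [spectralSign, ← cfc_mul _ _ a hs hs, ← cfc_const_one ℝ a]
  exact cfc_congr fun x _ => by split_ifs <;> norm_num

lemma isStrictlyPositive_spectralSign_mul [PartialOrder A] [StarOrderedRing A] {a : A}
    (ha : IsSelfAdjoint a) (hau : IsUnit a) : IsStrictlyPositive (spectralSign a * a) := by
  have hs := continuousOn_spectrum_ite_pos hau 1 (-1)
  nth_rw 2 [← cfc_id' ℝ a]
  rw [spectralSign, ← cfc_mul _ _ a hs, cfc_isStrictlyPositive_iff _ a]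
  intro x hx
  rcases (ne_of_mem_of_not_mem hx ((spectrum.zero_notMem_iff ℝ).mpr hau)).lt_or_gt with h | h
  · simp [h.not_gt, h]
  · simp [h]

end CStarAlgebra

theorem stmt_7_general {A : Type*} [CStarAlgebra A]
    (a b : A) (ha : IsSelfAdjoint a) (hau : IsUnit a) (hb : IsSelfAdjoint b)
    (p q : A)
    (hp : p = cfc (fun x : ℝ => if 0 < x then (1 : ℝ) else 0) a)
    (hpq : p + q = 1)
    (hpbp : p * b * p = 0) (hqbq : q * b * q = 0) :
    IsUnit (a + b) := by
  let _ := CStarAlgebra.spectralOrder A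
  have _ := CStarAlgebra.spectralOrderedRing A
  have hs : spectralSign a = p - q := by
    rw [spectralSign_eq_sub ha hau, ← hp, ← eq_sub_of_add_eq' hpq]
  have hsb : spectralSign a * b = -(b * spectralSign a) :=
    hs ▸ sub_mul_eq_neg_mul_sub_of_corners_eq_zero hpq hpbp hqbq
  have hskew : star (spectralSign a * b) = -(spectralSign a * b) := by
    rw [star_mul, hb.star_eq, (isSelfAdjoint_spectralSign a).star_eq, hsb, neg_neg]
  have hsa : IsUnit (spectralSign a * (a + b)) := by
    rw [mul_add]
    exact (isStrictlyPositive_spectralSign_mul ha hau).isUnit_add_of_star_eq_neg hskew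
  have hsu : IsUnit (spectralSign a) := by
    have hss := spectralSign_mul_self ha hau
    exact ⟨⟨_, _, hss, hss⟩, rfl⟩
  exact hsu.mul_left_iff.mp hsa

/-- Proposition 3.6: in a unital C*-algebra, if `a = a*` is invertible with spectral
projections `p` (positive part) and `q` (negative part), `p, q ≠ 0`, `p + q = 1`, and
`b = b*` satisfies `pbp = qbq = 0`, then `a + b` is invertible. -/
theorem stmt_7 {A : Type*} [CStarAlgebra A]
    (a b : A) (ha : IsSelfAdjoint a) (hau : IsUnit a) (hb : IsSelfAdjoint b)
    (p q : A)
    (hp : p = cfc (fun x : ℝ => if 0 < x then (1 : ℝ) else 0) a)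
    (hq : q = cfc (fun x : ℝ => if x < 0 then (1 : ℝ) else 0) a)
    (hp0 : p ≠ 0) (hq0 : q ≠ 0) (hpq : p + q = 1)
    (hpbp : p * b * p = 0) (hqbq : q * b * q = 0) :
    IsUnit (a + b) :=
  stmt_7_general a b ha hau hb p q hp hpq hpbp hqbq
end

section
/- Let H be a selfadjoint operator, H₁ = a + b|H| positive definite with 0 ≤ b < 1, and ζ = λ + iη with |η| > (a + |λ|b)/√(1 − b²). Then ‖H₁(H − ζ)⁻¹‖ < 1. -/
/-!
By the continuous functional calculus, `‖H₁(H − ζ)⁻¹‖` is the maximum over the spectrum of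
`(a + b|x|)/|x − ζ|`, so it suffices that `a + b|x| < |x − ζ|` for every real `x`. With
`c = a + b|λ|`, the triangle inequality and Cauchy–Schwarz give
`a + b|x| ≤ c + b|x − λ| ≤ √(c²/(1 − b²) + (x − λ)²) < √(η² + (x − λ)²)`.
-/

open Complex

section Resolvent

variable {R A : Type*} {p : A → Prop} [Field R] [StarRing R] [MetricSpace R]
  [IsTopologicalRing R] [ContinuousStar R] [TopologicalSpace A] [Ring A]
  [StarRing A] [Algebra R A] [ContinuousFunctionalCalculus R A p]

lemma cfc_sub_algebraMap (r : R) (a : A) (ha : p a := by cfc_tac) :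
    cfc (fun x ↦ x - r) a = a - algebraMap R A r := by
  rw [cfc_sub (fun x ↦ x) (fun _ ↦ r) a, cfc_id' R a, cfc_const r a]

lemma cfc_inv_sub_algebraMap [ContinuousInv₀ R] {r : R} {a : A} (hr : r ∉ spectrum R a)
    (ha : p a := by cfc_tac) :
    cfc (fun x ↦ (x - r)⁻¹) a = Ring.inverse (a - algebraMap R A r) := by
  have hne : ∀ x ∈ spectrum R a, x - r ≠ 0 := fun x hx h ↦ hr (sub_eq_zero.mp h ▸ hx)
  rw [cfc_inv (fun x ↦ x - r) a hne, cfc_sub_algebraMap r a]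

end Resolvent

lemma sq_add_mul_abs_lt {a b lam eta : ℝ} (ha : 0 ≤ a) (hb : 0 ≤ b)
    (h : (a + |lam| * b) ^ 2 < (1 - b ^ 2) * eta ^ 2) (x : ℝ) :
    (a + b * |x|) ^ 2 < (x - lam) ^ 2 + eta ^ 2 := by
  set c := a + |lam| * b
  set d := |x - lam|
  have hb1 : 0 < 1 - b ^ 2 := pos_of_mul_pos_left ((sq_nonneg c).trans_lt h) (sq_nonneg eta)
  have hx : a + b * |x| ≤ c + b * d := by
    have : |x| - |lam| ≤ d := abs_sub_abs_le_abs_sub x lam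
    nlinarith
  -- Cauchy–Schwarz for `(√(1 - b²), b) · (c / √(1 - b²), d)`
  have hcs : (1 - b ^ 2) * (c + b * d) ^ 2 ≤ c ^ 2 + (1 - b ^ 2) * d ^ 2 := by
    nlinarith [sq_nonneg (b * c - (1 - b ^ 2) * d)]
  have hd : d ^ 2 = (x - lam) ^ 2 := sq_abs _
  have h0 : 0 ≤ a + b * |x| := by positivity
  nlinarith [pow_le_pow_left₀ h0 hx 2]

lemma IsSelfAdjoint.isUnit_sub_algebraMap {A : Type*} [CStarAlgebra A] {a : A}
    (ha : IsSelfAdjoint a) {ζ : ℂ} (hζ : ζ.im ≠ 0) : IsUnit (a - algebraMap ℂ A ζ) := by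
  have : ζ ∉ spectrum ℂ a := fun h ↦ hζ (ha.im_eq_zero_of_mem_spectrum h)
  rw [spectrum.notMem_iff, ← neg_sub] at this
  simpa using this.neg

lemma IsSelfAdjoint.norm_cfc_mul_inverse_sub_lt_one {A : Type*} [CStarAlgebra A] {a : A}
    (ha : IsSelfAdjoint a) {f : ℝ → ℝ} {ζ : ℂ}
    (h : ∀ x ∈ spectrum ℝ a, |f x| < ‖(x : ℂ) - ζ‖) :
    ‖cfc f a * Ring.inverse (a - algebraMap ℂ A ζ)‖ < 1 := by
  by_cases hf : ContinuousOn f (spectrum ℝ a)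
  swap
  · simp [cfc_apply_of_not_continuousOn a hf]
  have hre : ∀ z ∈ spectrum ℂ a, z.re ∈ spectrum ℝ a := fun z hz ↦
    (spectrum.algebraMap_mem_iff ℂ).mp (ha.mem_spectrum_eq_re hz ▸ hz)
  have hζ : ζ ∉ spectrum ℂ a := fun hζ ↦ by
    simpa [← ha.mem_spectrum_eq_re hζ] using (abs_nonneg _).trans_lt (h _ (hre ζ hζ))
  have hne : ∀ z ∈ spectrum ℂ a, z - ζ ≠ 0 := fun z hz h ↦ hζ (sub_eq_zero.mp h ▸ hz)
  have hf' : ContinuousOn (fun z : ℂ ↦ (f z.re : ℂ)) (spectrum ℂ a) :=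
    continuous_ofReal.comp_continuousOn (hf.comp continuous_re.continuousOn hre)
  rw [cfc_real_eq_complex f ha, ← cfc_inv_sub_algebraMap hζ,
    ← cfc_mul _ (fun z ↦ (z - ζ)⁻¹) a hf'
    ((continuousOn_id.sub continuousOn_const).inv₀ hne)]
  refine norm_cfc_lt one_pos fun z hz ↦ ?_
  have hz_pos : 0 < ‖z - ζ‖ := norm_pos_iff.mpr (hne z hz)
  rw [norm_mul, norm_inv, norm_real, Real.norm_eq_abs, ← div_eq_mul_inv, div_lt_one hz_pos]
  simpa [← ha.mem_spectrum_eq_re hz] using h _ (hre z hz)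

theorem stmt_12_general {E : Type*} [NormedAddCommGroup E] [InnerProductSpace ℂ E] [CompleteSpace E]
    (H : E →L[ℂ] E) (hH : IsSelfAdjoint H)
    (a b lam eta : ℝ) (ha : 0 ≤ a) (hb0 : 0 ≤ b) (hb : b < 1)
    (zeta : ℂ) (hzeta : zeta = (lam : ℂ) + (eta : ℂ) * Complex.I)
    (heta : |eta| > (a + |lam| * b) / Real.sqrt (1 - b ^ 2)) :
    IsUnit (H - zeta • (1 : E →L[ℂ] E)) ∧
      ‖cfc (fun x : ℝ => a + b * |x|) H * Ring.inverse (H - zeta • (1 : E →L[ℂ] E))‖ < 1 := by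
  have hsqrt : 0 < Real.sqrt (1 - b ^ 2) := Real.sqrt_pos.mpr (by nlinarith)
  have hsq : (a + |lam| * b) ^ 2 < (1 - b ^ 2) * eta ^ 2 := by
    have h := (div_lt_iff₀ hsqrt).mp heta
    have := pow_lt_pow_left₀ h (by positivity) two_ne_zero
    rw [mul_pow, Real.sq_sqrt (by nlinarith), sq_abs] at this
    linarith
  have heta0 : eta ≠ 0 := by rintro rfl; nlinarith [sq_nonneg (a + |lam| * b)]
  rw [← Algebra.algebraMap_eq_smul_one]
  refine ⟨hH.isUnit_sub_algebraMap (by simpa [hzeta] using heta0),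
    hH.norm_cfc_mul_inverse_sub_lt_one fun x _ ↦ ?_⟩
  have hnorm : ‖(x : ℂ) - zeta‖ ^ 2 = (x - lam) ^ 2 + eta ^ 2 := by
    rw [hzeta, Complex.sq_norm, normSq_apply]
    simp only [sub_re, ofReal_re, add_re, mul_re, I_re, I_im, ofReal_im, sub_im, add_im, mul_im]
    ring
  rw [abs_of_nonneg (by positivity)]
  exact lt_of_pow_lt_pow_left₀ 2 (norm_nonneg _) (hnorm ▸ sq_add_mul_abs_lt ha hb0 hsq x)

/-- Theorem 2.7 (key estimate): for a selfadjoint `H` with `H₁ = a + b|H|` positive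
definite, `0 ≤ b < 1`, and `ζ = λ + iη` with `|η| > (a + |λ|b)/√(1 − b²)`, the operator
`H − ζ` is invertible and `‖H₁(H − ζ)⁻¹‖ < 1`. -/
theorem stmt_12 {E : Type*} [NormedAddCommGroup E] [InnerProductSpace ℂ E] [CompleteSpace E]
    (H : E →L[ℂ] E) (hH : IsSelfAdjoint H)
    (a b lam eta : ℝ) (ha : 0 ≤ a) (hb0 : 0 ≤ b) (hb : b < 1)
    (hpos : ∀ x ∈ spectrum ℝ H, 0 < a + b * |x|)
    (zeta : ℂ) (hzeta : zeta = (lam : ℂ) + (eta : ℂ) * Complex.I)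
    (heta : |eta| > (a + |lam| * b) / Real.sqrt (1 - b ^ 2)) :
    IsUnit (H - zeta • (1 : E →L[ℂ] E)) ∧
      ‖cfc (fun x : ℝ => a + b * |x|) H * Ring.inverse (H - zeta • (1 : E →L[ℂ] E))‖ < 1 :=
  stmt_12_general H hH a b lam eta ha hb0 hb zeta hzeta heta
end

section
/- Let H be an n×n Hermitian matrix with eigenvalues λ₁ ≥ … ≥ λₙ and A Hermitian with |⟨Aψ,ψ⟩| ≤ a‖ψ‖² + b⟨|H|ψ,ψ⟩ for all ψ, where b < 1. Then the eigenvalues μ₁ ≥ … ≥ μₙ of T = H + A satisfy |μₖ − λₖ| ≤ a + b|λₖ| for each k. -/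
/-!
The hypothesis puts the quadratic form of `T = H + A` between those of `H ∓ (b|H| + a)`. These
two operators have the eigenvectors of `H` and the eigenvalues `λₖ ∓ (b|λₖ| + a)`, which are still
in non-increasing order because `x ↦ x ± b|x|` is monotone for `b ≤ 1`. So it suffices that the
`k`-th largest eigenvalue is monotone in the quadratic form: if `q₁ ≤ q₂`, a nonzero `ψ` in the
span of the top `k + 1` eigenvectors of `q₁` and of the bottom `n - k` eigenvectors of `q₂`, which
exists by counting dimensions, gives `λₖ(q₁)‖ψ‖² ≤ q₁ ψ ≤ q₂ ψ ≤ λₖ(q₂)‖ψ‖²`.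
-/

open Matrix
open scoped ComplexOrder

/-- The square root of a positive semidefinite matrix, as `Matrix.PosSemidef.sqrt` was defined
in the older Mathlib (it has since been removed). -/
noncomputable def Matrix.PosSemidef.sqrt {n : Type*} [Fintype n] [DecidableEq n] {𝕜 : Type*}
    [RCLike 𝕜] {A : Matrix n n 𝕜} (hA : A.PosSemidef) : Matrix n n 𝕜 :=
  hA.isHermitian.eigenvectorUnitary.1 *
    diagonal ((↑) ∘ (fun x : ℝ => Real.sqrt x) ∘ hA.isHermitian.eigenvalues) *
      (star hA.isHermitian.eigenvectorUnitary : Matrix n n 𝕜)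

open Submodule
open scoped InnerProductSpace

theorem monotone_add_mul_abs_add {r : ℝ} (hr : |r| ≤ 1) (C : ℝ) :
    Monotone fun x : ℝ => x + r * |x| + C := by
  intro x y hxy
  have h : r * (|x| - |y|) ≤ y - x := calc
    r * (|x| - |y|) ≤ |r| * |(|x| - |y|)| := (le_abs_self _).trans (abs_mul _ _).le
    _ ≤ 1 * |x - y| := mul_le_mul hr (abs_abs_sub_abs_le_abs_sub x y) (abs_nonneg _) zero_le_one
    _ = y - x := by rw [one_mul, abs_sub_comm, abs_of_nonneg (sub_nonneg.mpr hxy)]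
  dsimp only
  linarith

namespace OrthonormalBasis

variable {ι 𝕜 E : Type*} [Fintype ι] [RCLike 𝕜] [NormedAddCommGroup E] [InnerProductSpace 𝕜 E]

/-- The quadratic form of the operator that is diagonal in `b` with eigenvalues `c`. -/
noncomputable def diagQuadForm (b : OrthonormalBasis ι 𝕜 E) (c : ι → ℝ) (ψ : E) : ℝ :=
  ∑ i, c i * ‖⟪b i, ψ⟫_𝕜‖ ^ 2

variable (b : OrthonormalBasis ι 𝕜 E)

theorem diagQuadForm_const (C : ℝ) (ψ : E) : b.diagQuadForm (fun _ => C) ψ = C * ‖ψ‖ ^ 2 := by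
  rw [diagQuadForm, ← Finset.mul_sum, b.sum_sq_norm_inner_right]

theorem diagQuadForm_add_mul_add_const (c d : ι → ℝ) (r C : ℝ) (ψ : E) :
    b.diagQuadForm (fun i => c i + r * d i + C) ψ
      = b.diagQuadForm c ψ + r * b.diagQuadForm d ψ + C * ‖ψ‖ ^ 2 := by
  rw [← diagQuadForm_const b]
  simp only [diagQuadForm, add_mul, Finset.sum_add_distrib, Finset.mul_sum, mul_assoc]

theorem inner_map_self_eq_diagQuadForm {T : E →ₗ[𝕜] E} {c : ι → ℝ}
    (hT : ∀ i, T (b i) = (c i : 𝕜) • b i) (ψ : E) :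
    ⟪ψ, T ψ⟫_𝕜 = b.diagQuadForm c ψ := by
  nth_rw 2 [← b.sum_repr' ψ]
  simp only [map_sum, map_smul, hT, inner_sum, inner_smul_right, diagQuadForm,
    RCLike.ofReal_mul, RCLike.ofReal_pow, ← RCLike.conj_mul, inner_conj_symm]
  exact Finset.sum_congr rfl fun i _ => by ring

theorem inner_eq_zero_of_mem_span {s : Finset ι} {ψ : E} (hψ : ψ ∈ span 𝕜 (b '' s)) {i : ι}
    (hi : i ∉ s) : ⟪b i, ψ⟫_𝕜 = 0 := by
  induction hψ using Submodule.span_induction with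
  | mem x hx =>
      obtain ⟨j, hj, rfl⟩ := hx
      exact b.orthonormal.2 fun h => hi (h ▸ hj)
  | zero => exact inner_zero_right _
  | add x y _ _ hx hy => rw [inner_add_right, hx, hy, add_zero]
  | smul r x _ hx => rw [inner_smul_right, hx, mul_zero]

theorem diagQuadForm_le_of_mem_span {s : Finset ι} {ψ : E} (hψ : ψ ∈ span 𝕜 (b '' s))
    {c d : ι → ℝ} (hcd : ∀ i ∈ s, c i ≤ d i) : b.diagQuadForm c ψ ≤ b.diagQuadForm d ψ := by
  refine Finset.sum_le_sum fun i _ => ?_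
  by_cases hi : i ∈ s
  · exact mul_le_mul_of_nonneg_right (hcd i hi) (by positivity)
  · simp [b.inner_eq_zero_of_mem_span hψ hi]

theorem finrank_span_image (s : Finset ι) : Module.finrank 𝕜 (span 𝕜 (b '' s)) = s.card := by
  have hli : LinearIndependent 𝕜 (fun i : (s : Set ι) => b i) :=
    (b.orthonormal.comp _ Subtype.val_injective).linearIndependent
  rw [Set.image_eq_range, finrank_span_eq_card hli]
  simp

theorem exists_ne_zero_mem_span_inter {n : ℕ} (b₁ b₂ : OrthonormalBasis (Fin n) 𝕜 E)
    {s t : Finset (Fin n)} (hst : n < s.card + t.card) :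
    ∃ ψ ∈ span 𝕜 (b₁ '' s), ψ ∈ span 𝕜 (b₂ '' t) ∧ ψ ≠ 0 := by
  have := Module.Finite.of_basis b₁.toBasis
  have hdim : Module.finrank 𝕜 E = n := by
    rw [Module.finrank_eq_card_basis b₁.toBasis, Fintype.card_fin]
  by_contra! h
  have := Submodule.finrank_add_finrank_le_of_disjoint (Submodule.disjoint_def.mpr h)
  rw [b₁.finrank_span_image, b₂.finrank_span_image, hdim] at this
  omega

theorem le_of_diagQuadForm_le {n : ℕ} (b₁ b₂ : OrthonormalBasis (Fin n) 𝕜 E)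
    {c₁ c₂ : Fin n → ℝ} (hc₁ : Antitone c₁) (hc₂ : Antitone c₂)
    (h : ∀ ψ, b₁.diagQuadForm c₁ ψ ≤ b₂.diagQuadForm c₂ ψ) (k : Fin n) : c₁ k ≤ c₂ k := by
  have hcard : n < (Finset.Iic k).card + (Finset.Ici k).card := by
    rw [Fin.card_Iic, Fin.card_Ici]; omega
  obtain ⟨ψ, hψ₁, hψ₂, hψ⟩ := exists_ne_zero_mem_span_inter b₁ b₂ hcard
  have hle : c₁ k * ‖ψ‖ ^ 2 ≤ c₂ k * ‖ψ‖ ^ 2 := calc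
    c₁ k * ‖ψ‖ ^ 2 = b₁.diagQuadForm (fun _ => c₁ k) ψ := (b₁.diagQuadForm_const _ ψ).symm
    _ ≤ b₁.diagQuadForm c₁ ψ :=
      b₁.diagQuadForm_le_of_mem_span hψ₁ fun i hi => hc₁ (Finset.mem_Iic.mp hi)
    _ ≤ b₂.diagQuadForm c₂ ψ := h ψ
    _ ≤ b₂.diagQuadForm (fun _ => c₂ k) ψ :=
      b₂.diagQuadForm_le_of_mem_span hψ₂ fun i hi => hc₂ (Finset.mem_Ici.mp hi)
    _ = c₂ k * ‖ψ‖ ^ 2 := b₂.diagQuadForm_const _ ψ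
  exact le_of_mul_le_mul_right hle (by positivity)

theorem abs_sub_le_of_abs_diagQuadForm_sub_le {n : ℕ} (b₁ b₂ : OrthonormalBasis (Fin n) 𝕜 E)
    {lam mu : Fin n → ℝ} (hlam : Antitone lam) (hmu : Antitone mu) {r a : ℝ} (hr : |r| ≤ 1)
    (h : ∀ ψ, |b₂.diagQuadForm mu ψ - b₁.diagQuadForm lam ψ|
      ≤ r * b₁.diagQuadForm (fun i => |lam i|) ψ + a * ‖ψ‖ ^ 2) (k : Fin n) :
    |mu k - lam k| ≤ a + r * |lam k| := by
  have hup : mu k ≤ lam k + r * |lam k| + a :=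
    b₂.le_of_diagQuadForm_le b₁ hmu ((monotone_add_mul_abs_add hr a).comp_antitone hlam)
      (fun ψ => by
        rw [Function.comp_def, b₁.diagQuadForm_add_mul_add_const]
        linarith [abs_le.mp (h ψ)]) k
  have hlo : lam k + -r * |lam k| + -a ≤ mu k :=
    b₁.le_of_diagQuadForm_le b₂
      ((monotone_add_mul_abs_add (abs_neg r ▸ hr) (-a)).comp_antitone hlam) hmu
      (fun ψ => by
        rw [Function.comp_def, b₁.diagQuadForm_add_mul_add_const]
        linarith [abs_le.mp (h ψ)]) k
  rw [abs_sub_le_iff]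
  constructor <;> linarith

end OrthonormalBasis

namespace Matrix

variable {ι κ 𝕜 : Type*} [Fintype ι] [Fintype κ] [DecidableEq ι] [RCLike 𝕜]

theorem star_dotProduct_mulVec_eq_diagQuadForm {M : Matrix ι ι 𝕜}
    (b : OrthonormalBasis κ 𝕜 (EuclideanSpace 𝕜 ι)) {c : κ → ℝ}
    (hM : ∀ i, M *ᵥ ⇑(b i) = c i • ⇑(b i)) (ψ : EuclideanSpace 𝕜 ι) :
    star ⇑ψ ⬝ᵥ (M *ᵥ ⇑ψ) = b.diagQuadForm c ψ := by
  rw [dotProduct_comm, ← EuclideanSpace.inner_eq_star_dotProduct]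
  refine b.inner_map_self_eq_diagQuadForm (T := toEuclideanLin M) (fun i => ?_) ψ
  ext j
  simp [hM i, RCLike.real_smul_eq_coe_mul]

theorem PosSemidef.sqrt_eq_cfc {A : Matrix ι ι 𝕜} (hA : A.PosSemidef) :
    hA.sqrt = cfc Real.sqrt A := by
  rw [hA.isHermitian.cfc_eq]
  rfl

theorem IsHermitian.sqrt_conjTranspose_mul_self {H : Matrix ι ι 𝕜} (hH : H.IsHermitian) :
    (posSemidef_conjTranspose_mul_self H).sqrt = cfc (fun x : ℝ => |x|) H := by
  rw [PosSemidef.sqrt_eq_cfc, hH.eq, ← sq,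
    ← cfc_comp_pow Real.sqrt 2 H (hf := by fun_prop) (ha := hH.isSelfAdjoint)]
  simp_rw [Real.sqrt_sq_eq_abs]

theorem IsHermitian.cfc_mulVec_eigenvectorBasis {H : Matrix ι ι 𝕜} (hH : H.IsHermitian)
    (f : ℝ → ℝ) (j : ι) :
    cfc f H *ᵥ ⇑(hH.eigenvectorBasis j) = f (hH.eigenvalues j) • ⇑(hH.eigenvectorBasis j) := by
  rw [hH.cfc_eq, IsHermitian.cfc, Unitary.conjStarAlgAut_apply, ← mulVec_mulVec, ← mulVec_mulVec,
    hH.star_eigenvectorUnitary_mulVec, diagonal_mulVec_single, mul_one,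
    ← hH.eigenvectorUnitary_mulVec]
  ext i
  simp [mulVec_single, RCLike.real_smul_eq_coe_mul, mul_comm]

theorem IsHermitian.star_dotProduct_cfc_mulVec {H : Matrix ι ι 𝕜} (hH : H.IsHermitian)
    (f : ℝ → ℝ) (σ : κ ≃ ι) (ψ : EuclideanSpace 𝕜 ι) :
    star ⇑ψ ⬝ᵥ (cfc f H *ᵥ ⇑ψ)
      = (hH.eigenvectorBasis.reindex σ.symm).diagQuadForm (f ∘ hH.eigenvalues ∘ σ) ψ := by
  refine star_dotProduct_mulVec_eq_diagQuadForm _ (fun i => ?_) ψ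
  rw [OrthonormalBasis.reindex_apply, Equiv.symm_symm]
  exact hH.cfc_mulVec_eigenvectorBasis f (σ i)

theorem IsHermitian.star_dotProduct_mulVec {H : Matrix ι ι 𝕜} (hH : H.IsHermitian)
    (σ : κ ≃ ι) (ψ : EuclideanSpace 𝕜 ι) :
    star ⇑ψ ⬝ᵥ (H *ᵥ ⇑ψ)
      = (hH.eigenvectorBasis.reindex σ.symm).diagQuadForm (hH.eigenvalues ∘ σ) ψ := by
  nth_rw 1 [← cfc_id ℝ H hH.isSelfAdjoint]
  exact hH.star_dotProduct_cfc_mulVec id σ ψ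

theorem IsHermitian.star_dotProduct_mulVec_eq_diagQuadForm_sub {H A : Matrix ι ι 𝕜}
    (hH : H.IsHermitian) (hT : (H + A).IsHermitian) (σ τ : κ ≃ ι) (ψ : EuclideanSpace 𝕜 ι) :
    star ⇑ψ ⬝ᵥ (A *ᵥ ⇑ψ)
      = (hT.eigenvectorBasis.reindex τ.symm).diagQuadForm (hT.eigenvalues ∘ τ) ψ
        - (hH.eigenvectorBasis.reindex σ.symm).diagQuadForm (hH.eigenvalues ∘ σ) ψ := by
  rw [← hT.star_dotProduct_mulVec, ← hH.star_dotProduct_mulVec, add_mulVec, dotProduct_add,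
    add_sub_cancel_left]

end Matrix

theorem EuclideanSpace.star_dotProduct_self {ι 𝕜 : Type*} [Fintype ι] [RCLike 𝕜]
    (ψ : EuclideanSpace 𝕜 ι) : star ⇑ψ ⬝ᵥ ⇑ψ = ((‖ψ‖ ^ 2 : ℝ) : 𝕜) := by
  rw [dotProduct_comm, ← EuclideanSpace.inner_eq_star_dotProduct, inner_self_eq_norm_sq_to_K,
    RCLike.ofReal_pow]

theorem stmt_13_general {n : ℕ} (H A : Matrix (Fin n) (Fin n) ℂ)
    (hH : H.IsHermitian) (hT : (H + A).IsHermitian)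
    (a b : ℝ) (hb0 : 0 ≤ b) (hb : b < 1)
    (absH : Matrix (Fin n) (Fin n) ℂ)
    (habsH : absH = (Matrix.posSemidef_conjTranspose_mul_self H).sqrt)
    (hbound : ∀ ψ : Fin n → ℂ,
      ‖dotProduct (star ψ) (A.mulVec ψ)‖ ≤
        a * (dotProduct (star ψ) ψ).re +
          b * (dotProduct (star ψ) (absH.mulVec ψ)).re)
    (lam mu : Fin n → ℝ) (hlam : Antitone lam) (hmu : Antitone mu)
    (hlam' : ∃ σ : Equiv.Perm (Fin n), lam = hH.eigenvalues ∘ σ)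
    (hmu' : ∃ σ : Equiv.Perm (Fin n), mu = hT.eigenvalues ∘ σ) :
    ∀ k : Fin n, |mu k - lam k| ≤ a + b * |lam k| := by
  obtain ⟨σ, rfl⟩ := hlam'
  obtain ⟨τ, rfl⟩ := hmu'
  refine (hH.eigenvectorBasis.reindex σ.symm).abs_sub_le_of_abs_diagQuadForm_sub_le
    (hT.eigenvectorBasis.reindex τ.symm) hlam hmu
    (abs_le.mpr ⟨by linarith, hb.le⟩) fun ψ => ?_
  have := hbound ψ
  rw [hH.star_dotProduct_mulVec_eq_diagQuadForm_sub hT σ τ, habsH,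
    hH.sqrt_conjTranspose_mul_self, hH.star_dotProduct_cfc_mulVec _ σ,
    EuclideanSpace.star_dotProduct_self] at this
  simp only [← RCLike.ofReal_sub, RCLike.norm_ofReal, ← RCLike.re_to_complex, RCLike.ofReal_re,
    Function.comp_def] at this ⊢
  linarith

/-- The eigenvalue bound (1.7)/(1.8) for Hermitian matrices: if
`|⟨Aψ,ψ⟩| ≤ a‖ψ‖² + b⟨|H|ψ,ψ⟩` with `b < 1`, then the non-increasingly ordered
eigenvalues of `H` and `T = H + A` satisfy `|μₖ − λₖ| ≤ a + b|λₖ|`. -/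
theorem stmt_13 {n : ℕ} (H A : Matrix (Fin n) (Fin n) ℂ)
    (hH : H.IsHermitian) (hA : A.IsHermitian) (hT : (H + A).IsHermitian)
    (a b : ℝ) (ha : 0 ≤ a) (hb0 : 0 ≤ b) (hb : b < 1)
    (absH : Matrix (Fin n) (Fin n) ℂ)
    (habsH : absH = (Matrix.posSemidef_conjTranspose_mul_self H).sqrt)
    (hbound : ∀ ψ : Fin n → ℂ,
      ‖dotProduct (star ψ) (A.mulVec ψ)‖ ≤
        a * (dotProduct (star ψ) ψ).re +
          b * (dotProduct (star ψ) (absH.mulVec ψ)).re)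
    (lam mu : Fin n → ℝ) (hlam : Antitone lam) (hmu : Antitone mu)
    (hlam' : ∃ σ : Equiv.Perm (Fin n), lam = hH.eigenvalues ∘ σ)
    (hmu' : ∃ σ : Equiv.Perm (Fin n), mu = hT.eigenvalues ∘ σ) :
    ∀ k : Fin n, |mu k - lam k| ≤ a + b * |lam k| :=
  stmt_13_general H A hH hT a b hb0 hb absH habsH hbound lam mu hlam hmu hlam' hmu'
end

section
/- Let D₊ and D₋ be bounded symmetric non-negative operators on Hilbert spaces 𝓗₊ and 𝓗₋ respectively, and U : 𝓗₋ → 𝓗₊ a unitary. Then the operator J + D, where J = [[0, U],[U*, 0]] and D = [[D₊, 0],[0, −D₋]] on 𝓗₊ ⊕ 𝓗₋, is invertible in B(𝓗₊ ⊕ 𝓗₋). -/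
/-!
Since `U` is unitary, `[[A, U], [U*, D]]` factors as
`[[1, 0], [D U*, 1]] · [[0, U], [U*, 0]] · [[1 - U D U* A, 0], [0, 1]] · [[1, 0], [U* A, 1]]`,
so with `A = D₊`, `D = -D₋` it is invertible as soon as `1 + (U D₋ U*) D₊` is. That is a product
`1 + a b` of non-negative elements of a C⋆-algebra: with `r = √a`, the spectrum of `a b = r (r b)`
agrees away from `0` with that of `r b r ≥ 0`, so `-1` is not in it.
-/

open ContinuousLinearMap

/-- The 2×2 block operator `[[A, B],[C, D]]` on `Hp × Hm`. -/
noncomputable def block {Hp Hm : Type*}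
    [NormedAddCommGroup Hp] [InnerProductSpace ℂ Hp] [CompleteSpace Hp]
    [NormedAddCommGroup Hm] [InnerProductSpace ℂ Hm] [CompleteSpace Hm]
    (A : Hp →L[ℂ] Hp) (B : Hm →L[ℂ] Hp) (C : Hp →L[ℂ] Hm) (D : Hm →L[ℂ] Hm) :
    (Hp × Hm) →L[ℂ] (Hp × Hm) :=
  (A.comp (ContinuousLinearMap.fst ℂ Hp Hm) + B.comp (ContinuousLinearMap.snd ℂ Hp Hm)).prod
    (C.comp (ContinuousLinearMap.fst ℂ Hp Hm) + D.comp (ContinuousLinearMap.snd ℂ Hp Hm))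

lemma isUnit_one_add_iff_neg_one_notMem_spectrum {R A : Type*} [CommRing R] [Ring A]
    [Algebra R A] (a : A) : IsUnit (1 + a) ↔ (-1 : R) ∉ spectrum R a := by
  rw [spectrum.notMem_iff, map_neg, map_one, ← neg_add', IsUnit.neg_iff]

section CStarAlgebra

variable {A : Type*} [CStarAlgebra A] [PartialOrder A] [StarOrderedRing A]

lemma isUnit_one_add_of_nonneg {a : A} (ha : 0 ≤ a) : IsUnit (1 + a) :=
  (isUnit_one_add_iff_neg_one_notMem_spectrum (R := ℝ) a).mpr fun h ↦ by
    linarith [spectrum_nonneg_of_nonneg ha h]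

lemma isUnit_one_add_mul_of_nonneg {a b : A} (ha : 0 ≤ a) (hb : 0 ≤ b) :
    IsUnit (1 + a * b) := by
  set r := CFC.sqrt a
  have hr : IsSelfAdjoint r := .of_nonneg (CFC.sqrt_nonneg a)
  have hconj : IsUnit (1 + star r * b * r) :=
    isUnit_one_add_of_nonneg (star_left_conjugate_nonneg hb r)
  rw [hr.star_eq, isUnit_one_add_iff_neg_one_notMem_spectrum (R := ℝ)] at hconj
  rw [← CFC.sqrt_mul_sqrt_self a ha, mul_assoc,
    isUnit_one_add_iff_neg_one_notMem_spectrum (R := ℝ)]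
  exact (spectrum.unit_mem_mul_comm (r := -1)).not.mp hconj

end CStarAlgebra

namespace block

variable {Hp Hm : Type*}
    [NormedAddCommGroup Hp] [InnerProductSpace ℂ Hp] [CompleteSpace Hp]
    [NormedAddCommGroup Hm] [InnerProductSpace ℂ Hm] [CompleteSpace Hm]

@[simp]
lemma apply (A : Hp →L[ℂ] Hp) (B : Hm →L[ℂ] Hp) (C : Hp →L[ℂ] Hm) (D : Hm →L[ℂ] Hm)
    (x : Hp × Hm) : block A B C D x = (A x.1 + B x.2, C x.1 + D x.2) := rfl

lemma mul (A A' : Hp →L[ℂ] Hp) (B B' : Hm →L[ℂ] Hp) (C C' : Hp →L[ℂ] Hm)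
    (D D' : Hm →L[ℂ] Hm) :
    block A B C D * block A' B' C' D' =
      block (A ∘L A' + B ∘L C') (A ∘L B' + B ∘L D') (C ∘L A' + D ∘L C') (C ∘L B' + D ∘L D') :=
  ContinuousLinearMap.ext fun _ ↦ Prod.ext
    (by simp only [mul_apply_eq_comp, apply, map_add, add_apply, comp_apply]; abel)
    (by simp only [mul_apply_eq_comp, apply, map_add, add_apply, comp_apply]; abel)

lemma one : block (1 : Hp →L[ℂ] Hp) 0 0 (1 : Hm →L[ℂ] Hm) = 1 := by
  ext <;> simp

lemma isUnit_lowerTriangular (X : Hp →L[ℂ] Hm) : IsUnit (block 1 0 X 1) :=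
  isUnit_iff_exists.mpr
    ⟨block 1 0 (-X) 1, by simpa [mul, one_def] using one, by simpa [mul, one_def] using one⟩

lemma isUnit_diagonal {T : Hp →L[ℂ] Hp} {S : Hm →L[ℂ] Hm} (hT : IsUnit T) (hS : IsUnit S) :
    IsUnit (block T 0 0 S) :=
  isUnit_iff_exists.mpr ⟨block ↑hT.unit⁻¹ 0 0 ↑hS.unit⁻¹,
    by simp [mul, one, ← mul_def], by simp [mul, one, ← mul_def]⟩

lemma isUnit_antidiagonal {B : Hm →L[ℂ] Hp} {C : Hp →L[ℂ] Hm} (hBC : B ∘L C = 1)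
    (hCB : C ∘L B = 1) : IsUnit (block 0 B C 0) :=
  isUnit_iff_exists.mpr
    ⟨block 0 B C 0, by simp [mul, one, hBC, hCB], by simp [mul, one, hBC, hCB]⟩

variable {A : Hp →L[ℂ] Hp} {B : Hm →L[ℂ] Hp} {C : Hp →L[ℂ] Hm} {D : Hm →L[ℂ] Hm}

lemma eq_lowerTriangular_mul_antidiagonal_mul_diagonal_mul_lowerTriangular
    (hBC : B ∘L C = 1) (hCB : C ∘L B = 1) :
    block A B C D = block 1 0 (D ∘L C) 1 * block 0 B C 0 *
      block (1 - B ∘L D ∘L C ∘L A) 0 0 1 * block 1 0 (C ∘L A) 1 := by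
  have hBC' (x : Hp) : B (C x) = x := congr($hBC x)
  have hCB' (y : Hm) : C (B y) = y := congr($hCB y)
  exact ContinuousLinearMap.ext fun x ↦ Prod.ext (by simp [hBC']) (by simp [hBC', hCB', add_comm])

lemma isUnit_of_isUnit_one_sub_comp (hBC : B ∘L C = 1) (hCB : C ∘L B = 1)
    (hT : IsUnit (1 - B ∘L D ∘L C ∘L A)) : IsUnit (block A B C D) := by
  rw [eq_lowerTriangular_mul_antidiagonal_mul_diagonal_mul_lowerTriangular hBC hCB]
  exact (((isUnit_lowerTriangular _).mul (isUnit_antidiagonal hBC hCB)).mul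
    (isUnit_diagonal hT isUnit_one)).mul (isUnit_lowerTriangular _)

end block

/-- Invertibility of `J + D = [[D₊, U],[U*, −D₋]]` for `D₊, D₋` bounded non-negative
selfadjoint and `U` unitary (used in the proof of Theorem 2.15). -/
theorem stmt_16 {Hp Hm : Type*}
    [NormedAddCommGroup Hp] [InnerProductSpace ℂ Hp] [CompleteSpace Hp]
    [NormedAddCommGroup Hm] [InnerProductSpace ℂ Hm] [CompleteSpace Hm]
    (Dp : Hp →L[ℂ] Hp) (Dm : Hm →L[ℂ] Hm) (U : Hm →L[ℂ] Hp)
    (hDp : Dp.IsPositive) (hDm : Dm.IsPositive)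
    (hU1 : (adjoint U) ∘L U = 1) (hU2 : U ∘L (adjoint U) = 1) :
    IsUnit (block Dp U (adjoint U) (-Dm)) := by
  refine block.isUnit_of_isUnit_one_sub_comp hU2 hU1 ?_
  have hconj : 0 ≤ U ∘L Dm ∘L adjoint U := (nonneg_iff_isPositive _).mpr (hDm.conj_adjoint U)
  have hDp' : 0 ≤ Dp := (nonneg_iff_isPositive _).mpr hDp
  convert isUnit_one_add_mul_of_nonneg hconj hDp' using 1
  simp [sub_eq_add_neg, mul_def, comp_assoc]
end

section
/- Let M = [[A₊, F],[F*, A₋]] be a 2×2 block operator on 𝓗₊ ⊕ 𝓗₋ where A₊ is uniformly accretive (Re⟨A₊ψ,ψ⟩ ≥ c‖ψ‖² for some c > 0) and A₋ is uniformly dissipative (Re⟨A₋ψ,ψ⟩ ≤ −c‖ψ‖²), with A₊, A₋, F bounded. Then M is invertible in B(𝓗₊ ⊕ 𝓗₋). -/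
/-!
Writing `J = diag(1, -1)`, the operator `J M = [[A₊, F], [-F*, -A₋]]` has the skew-adjoint
off-diagonal part `[[0, F], [-F*, 0]]`, which contributes nothing to `Re ⟨J M v, v⟩`. Hence
`Re ⟨J M (x, y), (x, y)⟩ = Re ⟨A₊ x, x⟩ - Re ⟨A₋ y, y⟩ ≥ c (‖x‖² + ‖y‖²)`, so `J M` is uniformly
accretive for the `L²` inner product on `Hp × Hm`, hence invertible, and so is `M = J (J M)`.
-/

open ContinuousLinearMap
open scoped InnerProductSpace

theorem ContinuousLinearMap.isUnit_of_le_re_inner_map {𝕜 H : Type*} [RCLike 𝕜]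
    [NormedAddCommGroup H] [InnerProductSpace 𝕜 H] [CompleteSpace H]
    (T : H →L[𝕜] H) {c : ℝ} (hc : 0 < c) (h : ∀ x, c * ‖x‖ ^ 2 ≤ RCLike.re ⟪T x, x⟫_𝕜) :
    IsUnit T :=
  T.isUnit_of_forall_le_norm_inner_map (c := ⟨c, hc.le⟩) hc fun x =>
    (mul_comm (‖x‖ ^ 2) c ▸ h x).trans (RCLike.re_le_norm _)

section Block

variable {Hp Hm : Type*}
    [NormedAddCommGroup Hp] [InnerProductSpace ℂ Hp] [CompleteSpace Hp]
    [NormedAddCommGroup Hm] [InnerProductSpace ℂ Hm] [CompleteSpace Hm]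

theorem block_apply (A : Hp →L[ℂ] Hp) (B : Hm →L[ℂ] Hp) (C : Hp →L[ℂ] Hm) (D : Hm →L[ℂ] Hm)
    (x : Hp × Hm) : block A B C D x = (A x.1 + B x.2, C x.1 + D x.2) :=
  rfl

theorem block_one_zero_zero_neg_one_mul (A : Hp →L[ℂ] Hp) (B : Hm →L[ℂ] Hp)
    (C : Hp →L[ℂ] Hm) (D : Hm →L[ℂ] Hm) :
    block 1 0 0 (-1) * block A B C D = block A B (-C) (-D) := by
  ext x <;> simp [block_apply]

theorem block_one_zero_zero_neg_one_mul_self :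
    (block 1 0 0 (-1) * block 1 0 0 (-1) : (Hp × Hm) →L[ℂ] (Hp × Hm)) = 1 := by
  rw [block_one_zero_zero_neg_one_mul]
  ext x <;> simp [block_apply]

theorem re_inner_conj_block_neg_adjoint (A : Hp →L[ℂ] Hp) (F : Hm →L[ℂ] Hp) (D : Hm →L[ℂ] Hm)
    (v : WithLp 2 (Hp × Hm)) :
    (⟪(WithLp.prodContinuousLinearEquiv 2 ℂ Hp Hm).symm.conjContinuousAlgEquiv
        (block A F (-adjoint F) D) v, v⟫_ℂ).re =
      (⟪A v.fst, v.fst⟫_ℂ).re + (⟪D v.snd, v.snd⟫_ℂ).re := by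
  simp only [ContinuousLinearEquiv.conjContinuousAlgEquiv_apply_apply,
    ContinuousLinearEquiv.symm_symm, WithLp.prodContinuousLinearEquiv_apply,
    WithLp.prodContinuousLinearEquiv_symm_apply, block_apply, WithLp.ofLp_fst, WithLp.ofLp_snd,
    neg_apply, WithLp.prod_inner_apply, inner_add_left, inner_neg_left, adjoint_inner_left,
    Complex.add_re, Complex.neg_re]
  rw [← inner_conj_symm v.fst, Complex.conj_re]
  ring

theorem isUnit_block_neg_adjoint (A : Hp →L[ℂ] Hp) (F : Hm →L[ℂ] Hp) (D : Hm →L[ℂ] Hm)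
    {c : ℝ} (hc : 0 < c) (hA : ∀ x, c * ‖x‖ ^ 2 ≤ (⟪A x, x⟫_ℂ).re)
    (hD : ∀ y, c * ‖y‖ ^ 2 ≤ (⟪D y, y⟫_ℂ).re) :
    IsUnit (block A F (-adjoint F) D) := by
  rw [← isUnit_map_iff (WithLp.prodContinuousLinearEquiv 2 ℂ Hp Hm).symm.conjContinuousAlgEquiv]
  refine isUnit_of_le_re_inner_map _ hc fun v => ?_
  calc c * ‖v‖ ^ 2 = c * ‖v.fst‖ ^ 2 + c * ‖v.snd‖ ^ 2 := by
        rw [WithLp.prod_norm_sq_eq_of_L2, mul_add]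
    _ ≤ (⟪A v.fst, v.fst⟫_ℂ).re + (⟪D v.snd, v.snd⟫_ℂ).re := add_le_add (hA _) (hD _)
    _ = _ := (re_inner_conj_block_neg_adjoint A F D v).symm

end Block

/-- Invertibility of `M = [[A₊, F],[F*, A₋]]` with `A₊` uniformly accretive and `A₋`
uniformly dissipative (used in the proof of Theorem 2.12). -/
theorem stmt_18 {Hp Hm : Type*}
    [NormedAddCommGroup Hp] [InnerProductSpace ℂ Hp] [CompleteSpace Hp]
    [NormedAddCommGroup Hm] [InnerProductSpace ℂ Hm] [CompleteSpace Hm]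
    (Ap : Hp →L[ℂ] Hp) (Am : Hm →L[ℂ] Hm) (F : Hm →L[ℂ] Hp)
    (c : ℝ) (hc : 0 < c)
    (hAp : ∀ x : Hp, c * ‖x‖ ^ 2 ≤ (⟪Ap x, x⟫_ℂ).re)
    (hAm : ∀ x : Hm, (⟪Am x, x⟫_ℂ).re ≤ -(c * ‖x‖ ^ 2)) :
    IsUnit (block Ap F (adjoint F) Am) := by
  set J : (Hp × Hm) →L[ℂ] (Hp × Hm) := block 1 0 0 (-1)
  have hJJ : J * J = 1 := block_one_zero_zero_neg_one_mul_self
  have hJM : IsUnit (J * block Ap F (adjoint F) Am) := by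
    rw [block_one_zero_zero_neg_one_mul]
    exact isUnit_block_neg_adjoint Ap F (-Am) hc hAp fun y => by
      simpa using neg_le_neg (hAm y)
  rw [← one_mul (block Ap F (adjoint F) Am), ← hJJ, mul_assoc]
  exact (Units.isUnit ⟨J, J, hJJ, hJJ⟩).mul hJM
end

section
/- Let H be a selfadjoint operator with spectral gap (λ₋, λ₊) (λ₋ < λ₊, possibly infinite, with (λ₋,λ₊) ⊆ ρ(H)), and let a ≥ 0, 0 ≤ b < 1. If d ∈ (λ₋ + a + b|λ₋|, λ₊ − a − b|λ₊|) (assumed non-void), then sup over λ ∈ σ(H) of (a + b|λ|)/|λ − d| < 1. -/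
/-!
On each side of the gap the ratio is controlled by its value at the endpoint: writing
`x = l - t` with `t ≥ 0` for a point left of a finite endpoint `l < d`, the triangle inequality
gives `a + b|x| ≤ (a + b|l|) + b t` while `|x - d| = (d - l) + t`, so the ratio is at most a
mediant of `(a + b|l|)/(d - l)` and `b`, both `< 1`; an infinite endpoint leaves no spectrum on
its side. The right side of the gap is the mirror image of the left one under `x ↦ -x`.
-/

lemma add_mul_div_add_le_max {A D b t : ℝ} (hD : 0 < D) (ht : 0 ≤ t) :
    (A + b * t) / (D + t) ≤ max b (A / D) := by
  rw [div_le_iff₀ (by linarith)]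
  have hA : A ≤ max b (A / D) * D := (div_le_iff₀ hD).1 (le_max_right _ _)
  nlinarith [mul_le_mul_of_nonneg_right (le_max_left b (A / D)) ht]

lemma div_abs_sub_le_max_of_le {a b d l x : ℝ} (hb : 0 ≤ b) (hx : x ≤ l) (hld : l < d) :
    (a + b * |x|) / |x - d| ≤ max b ((a + b * |l|) / (d - l)) := by
  have hnum : a + b * |x| ≤ a + b * |l| + b * (l - x) := by
    have : |x| - |l| ≤ l - x := by
      simpa [abs_sub_comm x l, abs_of_nonneg (sub_nonneg.2 hx)] using abs_sub_abs_le_abs_sub x l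
    nlinarith
  have hden : |x - d| = d - l + (l - x) := by
    rw [abs_sub_comm, abs_of_pos (by linarith)]; ring
  rw [hden]
  calc (a + b * |x|) / (d - l + (l - x))
      ≤ (a + b * |l| + b * (l - x)) / (d - l + (l - x)) := by gcongr
    _ ≤ _ := add_mul_div_add_le_max (by linarith) (by linarith)

lemma exists_div_abs_sub_le_of_le_gap {a b d : ℝ} {lm : EReal} (hb0 : 0 ≤ b) (hb : b < 1)
    (hdm : ∀ l : ℝ, (l : EReal) = lm → l + a + b * |l| < d) (hd : lm < d) :
    ∃ c, 0 ≤ c ∧ c < 1 ∧ ∀ x : ℝ, (x : EReal) ≤ lm → (a + b * |x|) / |x - d| ≤ c := by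
  induction lm using EReal.rec with
  | bot => exact ⟨b, hb0, hb, fun x hx => absurd hx (by simp)⟩
  | top => exact absurd hd (by simp)
  | coe l =>
    have hld : l < d := by exact_mod_cast hd
    refine ⟨max b ((a + b * |l|) / (d - l)), hb0.trans (le_max_left _ _),
      max_lt hb ?_, fun x hx => div_abs_sub_le_max_of_le hb0 (by exact_mod_cast hx) hld⟩
    rw [div_lt_one (by linarith)]
    linarith [hdm l rfl]

lemma exists_div_abs_sub_le_of_gap_le {a b d : ℝ} {lp : EReal} (hb0 : 0 ≤ b) (hb : b < 1)
    (hdp : ∀ l : ℝ, (l : EReal) = lp → d < l - a - b * |l|) (hd : (d : EReal) < lp) :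
    ∃ c, 0 ≤ c ∧ c < 1 ∧ ∀ x : ℝ, lp ≤ (x : EReal) → (a + b * |x|) / |x - d| ≤ c := by
  have hdm : ∀ l : ℝ, (l : EReal) = -lp → l + a + b * |l| < -d := by
    intro l hl
    have := hdp (-l) (by rw [EReal.coe_neg, hl, neg_neg])
    rw [abs_neg] at this
    linarith
  obtain ⟨c, hc0, hc1, hc⟩ :=
    exists_div_abs_sub_le_of_le_gap hb0 hb hdm (by rwa [EReal.coe_neg, EReal.neg_lt_neg_iff])
  refine ⟨c, hc0, hc1, fun x hx => ?_⟩
  have := hc (-x) (by rwa [EReal.coe_neg, EReal.neg_le_neg_iff])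
  rwa [abs_neg, ← neg_sub', abs_neg] at this

theorem stmt_19_general (S : Set ℝ) (lm lp : EReal)
    (hgap : ∀ x ∈ S, (x : EReal) ≤ lm ∨ lp ≤ (x : EReal))
    (a b d : ℝ) (hb0 : 0 ≤ b) (hb : b < 1)
    (hdm : ∀ l : ℝ, (l : EReal) = lm → l + a + b * |l| < d)
    (hdp : ∀ l : ℝ, (l : EReal) = lp → d < l - a - b * |l|)
    (hd : lm < (d : EReal) ∧ (d : EReal) < lp) :
    sSup ((fun x => (a + b * |x|) / |x - d|) '' S) < 1 := by
  obtain ⟨cL, hcL0, hcL1, hL⟩ := exists_div_abs_sub_le_of_le_gap hb0 hb hdm hd.1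
  obtain ⟨cR, -, hcR1, hR⟩ := exists_div_abs_sub_le_of_gap_le hb0 hb hdp hd.2
  refine (Real.sSup_le ?_ (hcL0.trans (le_max_left cL cR))).trans_lt (max_lt hcL1 hcR1)
  rintro _ ⟨x, hxS, rfl⟩
  rcases hgap x hxS with h | h
  · exact (hL x h).trans (le_max_left _ _)
  · exact (hR x h).trans (le_max_right _ _)

/-- The key estimate in Theorem 3.1: if the spectrum `S = σ(H)` avoids the
(possibly infinite) gap `(λ₋, λ₊)` and `d` lies in the shrunken interval
`(λ₋ + a + b|λ₋|, λ₊ − a − b|λ₊|)` (a condition which is void at an infinite end),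
then `sup_{λ ∈ σ(H)} (a + b|λ|)/|λ − d| < 1`. -/
theorem stmt_19 (S : Set ℝ) (lm lp : EReal) (hlt : lm < lp)
    (hgap : ∀ x ∈ S, (x : EReal) ≤ lm ∨ lp ≤ (x : EReal))
    (a b d : ℝ) (ha : 0 ≤ a) (hb0 : 0 ≤ b) (hb : b < 1)
    (hdm : ∀ l : ℝ, (l : EReal) = lm → l + a + b * |l| < d)
    (hdp : ∀ l : ℝ, (l : EReal) = lp → d < l - a - b * |l|)
    (hd : lm < (d : EReal) ∧ (d : EReal) < lp) :
    sSup ((fun x => (a + b * |x|) / |x - d|) '' S) < 1 :=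
  stmt_19_general S lm lp hgap a b d hb0 hb hdm hdp hd
end
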